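/- The folding dynamics G is topologically transitive on the phase space X = 𝔠_N × ⟦−N,N⟧^ℕ: for all nonempty subsets U, V of X that are open for the metric d, there exist a point X ∈ U and an integer k > 0 such that G^k(X) ∈ V. -/

import Mathlib

/-!
Take `(C, F) ∈ U` and `(Č, F̌) ∈ V`. Keep `C` and the first `n + 1` folds of `F`, then
append a word of folds that carries the conformation reached so far to `Č`, then continue
with `F̌`. The new point lies in `X` and within `10⁻ⁿ` of `(C, F)`, hence in `U` for large
`n`, and the corresponding iterate of `G` lands exactly on `(Č, F̌)`. Only the starting point
of the orbit has to be acceptable, so the SAW requirement never obstructs the connecting word.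
-/

open scoped BigOperators

namespace HP

/-- A conformation of `N+1` residues in absolute encoding
(the initial residue, always `0`, is omitted): `C k` is the paper's `C_{k+1}`. -/
abbrev Conf (N : ℕ) := Fin N → ZMod 4

open Classical in
/-- `δ(a,b) = 0` if `a = b`, `1` otherwise. -/
noncomputable def delta {α : Type*} (a b : α) : ℝ := if a = b then 0 else 1

/-- `d_C(C,Č) = Σ_{k=1}^N δ(C_k,Č_k)·2^{N−k}`. -/
noncomputable def dC (N : ℕ) (C C' : Conf N) : ℝ :=
  ∑ k : Fin N, delta (C k) (C' k) * (2 : ℝ) ^ (N - 1 - (k : ℕ))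

/-- `d_F(F,F̌) = (9/(2N))·Σ_{k=0}^∞ |F^k − F̌^k|/10^{k+1}`. -/
noncomputable def dF (N : ℕ) (F F' : ℕ → ℤ) : ℝ :=
  (9 / (2 * (N : ℝ))) * ∑' k : ℕ, |((F k : ℝ)) - ((F' k : ℝ))| / 10 ^ (k + 1)

/-- `d((C,F),(Č,F̌)) = d_C(C,Č) + d_F(F,F̌)`. -/
noncomputable def distX (N : ℕ) (X Y : Conf N × (ℕ → ℤ)) : ℝ :=
  dC N X.1 Y.1 + dF N X.2 Y.2

/-- A folding sequence takes values in `⟦−N,N⟧`. -/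
def validSeq (N : ℕ) (F : ℕ → ℤ) : Prop := ∀ k, |F k| ≤ (N : ℤ)

/-- The fold map `f_k`: residues with (paper) index `≥ |k|` are rotated by
`f^{sign k}` where `f x = x + 1` (in `ℤ/4ℤ`); `f_0 = id`. -/
def foldMap (N : ℕ) (k : ℤ) (C : Conf N) : Conf N :=
  fun j => if ((j : ℕ) : ℤ) + 1 < |k| then C j else C j + (Int.sign k : ZMod 4)

/-- The folding dynamics `G(C,F) = (f_{i(F)}(C), σ(F))`. -/
def G (N : ℕ) : Conf N × (ℕ → ℤ) → Conf N × (ℕ → ℤ) :=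
  fun X => (foldMap N (X.2 0) X.1, fun n => X.2 (n + 1))

/-- The shift `σ` on folding sequences. -/
def shiftF (F : ℕ → ℤ) : ℕ → ℤ := fun k => F (k + 1)

/-- Unit move in the 2D lattice associated with an absolute encoding letter. -/
def step (c : ZMod 4) : ℤ × ℤ :=
  if c = 0 then (1, 0) else if c = 1 then (0, -1) else if c = 2 then (-1, 0) else (0, 1)

/-- `pos N C i` is the lattice point `X_i` of the 2D representation `p(C)`. -/
def pos (N : ℕ) (C : Conf N) : ℕ → ℤ × ℤ
  | 0 => (0, 0)
  | i + 1 => pos N C i + (if h : i < N then step (C ⟨i, h⟩) else 0)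

/-- The SAW requirement: the lattice points `X_0, …, X_N` are pairwise distinct. -/
def SAW (N : ℕ) (C : Conf N) : Prop :=
  ∀ i j : ℕ, i ≤ N → j ≤ N → pos N C i = pos N C j → i = j

/-- Successive application of fold maps `f_{k_1}, …, f_{k_n}`. -/
def folds (N : ℕ) : Conf N → List ℤ → Conf N
  | C, [] => C
  | C, k :: t => folds N (foldMap N k C) t

/-- The set `𝔠_N` of acceptable conformations: obtained from `(0,…,0)` by a
nonempty sequence of folds in `⟦−N,N⟧`, all intermediate conformations
(including the initial and final ones) satisfying the SAW requirement. -/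
def acceptable (N : ℕ) (C : Conf N) : Prop :=
  ∃ L : List ℤ, L ≠ [] ∧ (∀ k ∈ L, |k| ≤ (N : ℤ)) ∧
    folds N (fun _ => 0) L = C ∧
    ∀ p : List ℤ, p <+: L → SAW N (folds N (fun _ => 0) p)

/-- Membership in the phase space `X = 𝔠_N × ⟦−N,N⟧^ℕ`. -/
def inX (N : ℕ) (X : Conf N × (ℕ → ℤ)) : Prop :=
  acceptable N X.1 ∧ validSeq N X.2

/-- `U` is open in the metric space `(X, d)` (relative topology on `𝔠_N × ⟦−N,N⟧^ℕ`). -/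
def openIn (N : ℕ) (U : Set (Conf N × (ℕ → ℤ))) : Prop :=
  ∀ x ∈ U, ∃ ε > (0 : ℝ), ∀ y, inX N y → distX N x y < ε → y ∈ U

/-- `A` is closed in the metric space `(X, d)` (relative topology). -/
def closedIn (N : ℕ) (A : Set (Conf N × (ℕ → ℤ))) : Prop :=
  ∀ x, inX N x → x ∉ A → ∃ ε > (0 : ℝ), ∀ y, inX N y → distX N x y < ε → y ∉ A

section Folds

variable {N : ℕ}

lemma folds_append (C : Conf N) (L₁ L₂ : List ℤ) :
    folds N C (L₁ ++ L₂) = folds N (folds N C L₁) L₂ := by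
  induction L₁ generalizing C with
  | nil => rfl
  | cons k L₁ ih => exact ih (foldMap N k C)

lemma foldMap_natCast_add_one (m : ℕ) (C : Conf N) (j : Fin N) :
    foldMap N ((m : ℤ) + 1) C j = if (j : ℕ) < m then C j else C j + 1 := by
  have hsign : Int.sign ((m : ℤ) + 1) = 1 := Int.sign_eq_one_of_pos (by positivity)
  simp only [foldMap, abs_of_nonneg (by positivity : (0 : ℤ) ≤ m + 1), hsign, Int.cast_one,
    add_lt_add_iff_right, Nat.cast_lt]

lemma folds_replicate_natCast_add_one (m r : ℕ) (C : Conf N) (j : Fin N) :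
    folds N C (List.replicate r ((m : ℤ) + 1)) j = if (j : ℕ) < m then C j else C j + r := by
  induction r generalizing C with
  | zero => simp [folds]
  | succ r ih =>
    rw [List.replicate_succ, folds, ih, foldMap_natCast_add_one]
    split_ifs <;> push_cast <;> ring

/-- `f_{m+1}` rotates exactly the letters from index `m` on, so the letters of the target can be
set one after the other from left to right. -/
lemma exists_folds_eq_of_lt (D T : Conf N) {m : ℕ} (hm : m ≤ N) :
    ∃ L : List ℤ, (∀ k ∈ L, |k| ≤ N) ∧
      ∀ j : Fin N, (j : ℕ) < m → folds N D L j = T j := by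
  induction m with
  | zero => exact ⟨[], by simp, fun j hj => absurd hj (Nat.not_lt_zero _)⟩
  | succ m ih =>
    obtain ⟨L, hL, hagree⟩ := ih (by omega)
    let c : ZMod 4 := T ⟨m, hm⟩ - folds N D L ⟨m, hm⟩
    refine ⟨L ++ List.replicate c.val ((m : ℤ) + 1), ?_, fun j hj => ?_⟩
    · intro k hk
      rcases List.mem_append.1 hk with hk | hk
      · exact hL k hk
      · rw [List.eq_of_mem_replicate hk, abs_of_nonneg (by positivity)]
        exact_mod_cast hm
    · rw [folds_append, folds_replicate_natCast_add_one, ZMod.natCast_zmod_val]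
      split_ifs with hjm
      · exact hagree j hjm
      · obtain rfl : j = ⟨m, hm⟩ := Fin.ext (show (j : ℕ) = m by omega)
        exact add_sub_cancel _ _

lemma exists_folds_eq (D T : Conf N) :
    ∃ L : List ℤ, (∀ k ∈ L, |k| ≤ N) ∧ folds N D L = T := by
  obtain ⟨L, hL, hagree⟩ := exists_folds_eq_of_lt D T le_rfl
  exact ⟨L, hL, funext fun j => hagree j j.isLt⟩

end Folds

section Sequences

variable {N : ℕ}

lemma validSeq_appendStream' {L : List ℤ} (hL : ∀ k ∈ L, |k| ≤ N) {F : ℕ → ℤ}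
    (hF : validSeq N F) : validSeq N (L ++ₛ F) := by
  induction L with
  | nil => exact hF
  | cons a L ih =>
    rintro (_ | k)
    · exact hL a List.mem_cons_self
    · exact ih (fun k hk => hL k (List.mem_cons_of_mem a hk)) k

lemma validSeq.forall_mem_take {F : ℕ → ℤ} (hF : validSeq N F) (m : ℕ) :
    ∀ k ∈ Stream'.take m F, |k| ≤ N := fun k hk => by
  obtain ⟨i, hi, rfl⟩ := List.getElem_of_mem hk
  rw [Stream'.take_get _ _ _ hi]
  exact hF i

lemma take_appendStream'_apply_of_lt {α : Type*} (F G : ℕ → α) {m k : ℕ} (hk : k < m) :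
    (Stream'.take m F ++ₛ G) k = F k := by
  have hk' : k < (Stream'.take m F).length := (Stream'.length_take m F).symm ▸ hk
  exact (Stream'.get_append_left _ _ _ hk').trans (Stream'.take_get _ _ _ hk')

lemma iterate_G_appendStream' (C : Conf N) (L : List ℤ) (F : ℕ → ℤ) :
    (G N)^[L.length] (C, L ++ₛ F) = (folds N C L, F) := by
  induction L generalizing C with
  | nil => rfl
  | cons k L ih => exact ih (foldMap N k C)

end Sequences

section Distance

lemma tsum_le_of_eq_zero_of_le_geometric {g : ℕ → ℝ} {c r : ℝ} {n : ℕ} (hr₀ : 0 ≤ r)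
    (hr₁ : r < 1) (hg : ∀ k, 0 ≤ g k) (hzero : ∀ k < n, g k = 0)
    (hle : ∀ k, g k ≤ c * r ^ k) :
    ∑' k, g k ≤ c * r ^ n / (1 - r) := by
  have hgeom : Summable fun k => c * r ^ k :=
    (summable_geometric_of_lt_one hr₀ hr₁).mul_left c
  have hsum : Summable g := Summable.of_nonneg_of_le hg hle hgeom
  have hhead : ∑ k ∈ Finset.range n, g k = 0 :=
    Finset.sum_eq_zero fun k hk => hzero k (Finset.mem_range.1 hk)
  calc ∑' k, g k = ∑' k, g (k + n) := by
        rw [← hsum.sum_add_tsum_nat_add n, hhead, zero_add]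
    _ ≤ ∑' k, c * r ^ n * r ^ k :=
        Summable.tsum_le_tsum (fun k => (hle (k + n)).trans_eq (by ring))
          ((summable_nat_add_iff n).2 hsum)
          ((summable_geometric_of_lt_one hr₀ hr₁).mul_left _)
    _ = c * r ^ n / (1 - r) := by
        rw [tsum_mul_left, tsum_geometric_of_lt_one hr₀ hr₁, div_eq_mul_inv]

variable {N : ℕ}

lemma dF_le_of_eq_of_lt {F F' : ℕ → ℤ} (hF : validSeq N F) (hF' : validSeq N F') {n : ℕ}
    (hagree : ∀ k < n, F k = F' k) : dF N F F' ≤ (1 / 10 : ℝ) ^ n := by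
  have hdiff : ∀ k, |(F k : ℝ) - F' k| ≤ 2 * N := fun k => by
    have h := hF k
    have h' := hF' k
    rw [abs_le] at h h'
    exact_mod_cast (abs_le.2 ⟨by linarith, by linarith⟩ : |F k - F' k| ≤ 2 * (N : ℤ))
  have htail : ∑' k, |(F k : ℝ) - F' k| / 10 ^ (k + 1) ≤ 2 * N / 9 * (1 / 10) ^ n := by
    refine (tsum_le_of_eq_zero_of_le_geometric (c := 2 * N / 10) (r := 1 / 10) (by norm_num)
      (by norm_num) (fun k => by positivity) (fun k hk => by simp [hagree k hk])
      fun k => ?_).trans_eq (by ring)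
    calc |(F k : ℝ) - F' k| / 10 ^ (k + 1) ≤ 2 * N / 10 ^ (k + 1) := by gcongr; exact hdiff k
      _ = 2 * N / 10 * (1 / 10) ^ k := by rw [one_div_pow, pow_succ]; field_simp
  calc dF N F F' ≤ 9 / (2 * N) * (2 * N / 9 * (1 / 10) ^ n) :=
        mul_le_mul_of_nonneg_left htail (by positivity)
    _ ≤ (1 / 10 : ℝ) ^ n := by
        rcases Nat.eq_zero_or_pos N with rfl | hN
        · simp
        · exact (by field_simp : 9 / (2 * N) * (2 * N / 9 * (1 / 10 : ℝ) ^ n) = _).le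

lemma distX_le_of_eq_of_lt {C : Conf N} {F F' : ℕ → ℤ} (hF : validSeq N F)
    (hF' : validSeq N F') {n : ℕ} (hagree : ∀ k < n, F k = F' k) :
    distX N (C, F) (C, F') ≤ (1 / 10 : ℝ) ^ n := by
  simpa [distX, dC, delta] using dF_le_of_eq_of_lt hF hF' hagree

end Distance

theorem G_topologically_transitive_general (N : ℕ) :
    ∀ U V : Set (Conf N × (ℕ → ℤ)),
      (∀ x ∈ U, inX N x) → openIn N U → U.Nonempty →
      (∀ x ∈ V, inX N x) → openIn N V → V.Nonempty →
      ∃ x ∈ U, ∃ k : ℕ, 0 < k ∧ (G N)^[k] x ∈ V := by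
  rintro U V hU hUopen ⟨⟨C, F⟩, hxU⟩ hV - ⟨⟨C', F'⟩, hyV⟩
  obtain ⟨hC, hF⟩ := hU _ hxU
  obtain ⟨ε, hε, hball⟩ := hUopen _ hxU
  obtain ⟨n, hn⟩ := exists_pow_lt_of_lt_one hε (by norm_num : (1 / 10 : ℝ) < 1)
  let pre := Stream'.take (n + 1) F
  obtain ⟨L, hL, hfolds⟩ := exists_folds_eq (folds N C pre) C'
  let F₀ : ℕ → ℤ := pre ++ₛ (L ++ₛ F')
  have hF₀ : validSeq N F₀ :=
    validSeq_appendStream' (hF.forall_mem_take _) (validSeq_appendStream' hL (hV _ hyV).2)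
  have hagree : ∀ k < n, F k = F₀ k := fun k hk =>
    (take_appendStream'_apply_of_lt F _ (Nat.lt_succ_of_lt hk)).symm
  have hpre : pre.length = n + 1 := Stream'.length_take _ _
  refine ⟨(C, F₀), hball _ ⟨hC, hF₀⟩ ((distX_le_of_eq_of_lt hF hF₀ hagree).trans_lt hn),
    L.length + pre.length, by omega, ?_⟩
  rw [Function.iterate_add_apply, iterate_G_appendStream' C pre (L ++ₛ F'),
    iterate_G_appendStream', hfolds]
  exact hyV

/-- `G` is topologically transitive on `X = 𝔠_N × ⟦−N,N⟧^ℕ`: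
for all nonempty subsets `U, V` of `X` open for the metric `d`, some point of
`U` is sent into `V` by some iterate `G^k`, `k > 0`. -/
theorem G_topologically_transitive (N : ℕ) (hN : 1 ≤ N) :
    ∀ U V : Set (Conf N × (ℕ → ℤ)),
      (∀ x ∈ U, inX N x) → openIn N U → U.Nonempty →
      (∀ x ∈ V, inX N x) → openIn N V → V.Nonempty →
      ∃ x ∈ U, ∃ k : ℕ, 0 < k ∧ (G N)^[k] x ∈ V :=
  G_topologically_transitive_general N

end HP
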